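/- Uniform continuity of the log-potential in the bounded-Lipschitz metric (the claim (23), 'High_tower', in the proof of Theorem 1). Let β ∈ {1,2} and γ ∈ (0,1], with s_* = β(√γ−1)², s^* = β(√γ+1)², and σ_{β,γ} the scaled Marchenko–Pastur law. Fix real numbers a, b, T with s^* < a ≤ b ≤ T. Then for every δ > 0 there exists ε > 0 such that for every z ∈ [a,b] and every Borel probability measure μ on ℝ supported in [0,T] satisfying both (1) the function y ↦ ln|z−y| is μ-integrable, and (2) |∫ h dμ − ∫ h dσ_{β,γ}| ≤ ε for every function h : ℝ → ℝ with sup_y |h(y)| + Lip(h) ≤ 1 (Lip(h) the Lipschitz constant of h), one has ∫ ln|z−y| μ(dy) ≤ ∫ ln(z−t) σ_{β,γ}(dt) + δ. -/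

import Mathlib

/-!
Put `η = min (a - s^*, 1)`. On `[0, T]` the function `y ↦ ln|z - y|` is dominated by a bounded
Lipschitz function `G` of `|z - y|` (the logarithm truncated to `[η, T]`, corrected near `y = z`
because `Real.log 0 = 0`), and `G` agrees with `ln (z - y)` on the support `[s_*, s^*]` of
`σ_{β,γ}`, where `z - y ≥ η`. Testing the bounded-Lipschitz hypothesis against `G / ‖G‖_BL` gives
`∫ ln|z - y| dμ ≤ ∫ G dμ ≤ ∫ G dσ + ‖G‖_BL ε = ∫ ln (z - t) dσ + ‖G‖_BL ε`, and `‖G‖_BL` depends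
only on `η` and `T`, not on `z` or `μ`.
-/

open MeasureTheory Filter Real

/-- Density of the scaled Marchenko–Pastur law `σ_{β,γ}`, supported on
`[β(√γ−1)², β(√γ+1)²]`. -/
noncomputable def mpDensity (β γ s : ℝ) : ℝ :=
  if s ∈ Set.Icc (β * (Real.sqrt γ - 1) ^ 2) (β * (Real.sqrt γ + 1) ^ 2) then
    Real.sqrt ((s - β * (Real.sqrt γ - 1) ^ 2) * (β * (Real.sqrt γ + 1) ^ 2 - s)) /
      (β * (2 * Real.pi) * γ * s)
  else 0

/-- The scaled Marchenko–Pastur law `σ_{β,γ}`. -/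
noncomputable def mpLaw (β γ : ℝ) : Measure ℝ :=
  MeasureTheory.volume.withDensity fun s => ENNReal.ofReal (mpDensity β γ s)

lemma mpLaw_ae_mem (β γ : ℝ) :
    ∀ᵐ y ∂mpLaw β γ, y ∈ Set.Icc (β * (√γ - 1) ^ 2) (β * (√γ + 1) ^ 2) := by
  have : Measurable (mpDensity β γ) := by
    unfold mpDensity
    exact Measurable.ite measurableSet_Icc (by fun_prop) measurable_const
  rw [mpLaw, ae_withDensity_iff this.ennreal_ofReal]
  refine ae_of_all _ fun y hy => by_contra fun hy' => hy ?_
  simp [mpDensity, hy']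

section BoundedLipschitz

variable {α : Type*} [PseudoEMetricSpace α] [MeasurableSpace α] {μ ν : Measure α} {ε : ℝ}
  {G : α → ℝ} {M : ℝ} {K : NNReal}

theorem abs_integral_sub_le_mul_of_boundedLipschitz
    (hε : ∀ (h : α → ℝ) (c : ℝ) (K : NNReal), (∀ y, |h y| ≤ c) → LipschitzWith K h →
      c + (K : ℝ) ≤ 1 → |∫ y, h y ∂μ - ∫ y, h y ∂ν| ≤ ε)
    (hM : ∀ y, |G y| ≤ M) (hK : LipschitzWith K G) (hMK : 0 < M + K) :
    |∫ y, G y ∂μ - ∫ y, G y ∂ν| ≤ (M + K) * ε := by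
  set C := M + (K : ℝ)
  have hscaled := hε (fun y => C⁻¹ • G y) (C⁻¹ * M) (‖C⁻¹‖₊ * K)
    (fun y => by rw [smul_eq_mul, abs_mul, abs_of_pos (inv_pos.2 hMK)]; gcongr; exact hM y)
    ((lipschitzWith_smul C⁻¹).comp hK)
    (by simp only [NNReal.coe_mul, coe_nnnorm, norm_inv, Real.norm_of_nonneg hMK.le]
        rw [← mul_add, inv_mul_cancel₀ hMK.ne'])
  rwa [integral_smul, integral_smul, ← smul_sub, smul_eq_mul, abs_mul,
    abs_of_pos (inv_pos.2 hMK), inv_mul_le_iff₀ hMK] at hscaled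

theorem integral_le_add_of_boundedLipschitz_majorant [OpensMeasurableSpace α]
    [IsFiniteMeasure μ]
    (hε : ∀ (h : α → ℝ) (c : ℝ) (K : NNReal), (∀ y, |h y| ≤ c) → LipschitzWith K h →
      c + (K : ℝ) ≤ 1 → |∫ y, h y ∂μ - ∫ y, h y ∂ν| ≤ ε)
    (hM : ∀ y, |G y| ≤ M) (hK : LipschitzWith K G) (hMK : 0 < M + K)
    {f g : α → ℝ} (hf : Integrable f μ) (hfG : f ≤ᵐ[μ] G) (hGg : G =ᵐ[ν] g) :
    ∫ y, f y ∂μ ≤ ∫ y, g y ∂ν + (M + K) * ε := by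
  have hG : Integrable G μ :=
    (integrable_const M).mono' hK.continuous.aestronglyMeasurable (ae_of_all _ hM)
  calc ∫ y, f y ∂μ ≤ ∫ y, G y ∂μ := integral_mono_ae hf hG hfG
    _ ≤ ∫ y, G y ∂ν + (M + K) * ε := by
        linarith [(abs_le.1 (abs_integral_sub_le_mul_of_boundedLipschitz hε hM hK hMK)).2]
    _ = ∫ y, g y ∂ν + (M + K) * ε := by rw [integral_congr_ae hGg]

end BoundedLipschitz

lemma lipschitzWith_log_max {η : ℝ} (hη : 0 < η) :
    LipschitzWith (Real.toNNReal η⁻¹) fun d => log (max d η) := by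
  refine LipschitzWith.of_le_add_mul' η⁻¹ fun x y => ?_
  have hv : η ≤ max y η := le_max_right _ _
  have hv0 : 0 < max y η := hη.trans_le hv
  have hu0 : 0 < max x η := hη.trans_le (le_max_right _ _)
  have hdiff : |max x η - max y η| ≤ dist x y := abs_max_sub_max_le_abs x y η
  calc log (max x η) = log (max y η) + log (max x η / max y η) := by
        rw [log_div hu0.ne' hv0.ne']; ring
    _ ≤ log (max y η) + (max x η - max y η) / max y η := by
        gcongr
        rw [sub_div, div_self hv0.ne']
        exact log_le_sub_one_of_pos (div_pos hu0 hv0)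
    _ ≤ log (max y η) + |max x η - max y η| / η := by
        gcongr log (max y η) + ?_
        exact (div_le_div_of_nonneg_right (le_abs_self _) hv0.le).trans
          (div_le_div_of_nonneg_left (abs_nonneg _) hη hv)
    _ ≤ log (max y η) + η⁻¹ * dist x y := by
        rw [div_eq_inv_mul]; gcongr

/-- The tent term `-log η · (1 - d/η)⁺` makes `truncLog η R 0 = 0 = log 0`, so that
`log d ≤ truncLog η R d` holds on all of `[0, R]`. -/
noncomputable def truncLog (η R d : ℝ) : ℝ :=
  log (max (min d R) η) - log η * max (1 - d / η) 0

section truncLog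

variable {η R d : ℝ}

lemma lipschitzWith_truncLog (hη : 0 < η) :
    LipschitzWith (Real.toNNReal η⁻¹ + ‖log η‖₊ * Real.toNNReal η⁻¹) (truncLog η R) := by
  have hlog : LipschitzWith (Real.toNNReal η⁻¹) fun d => log (max (min d R) η) := by
    simpa [Function.comp_def] using (lipschitzWith_log_max hη).comp (LipschitzWith.id.min_const R)
  have htent : LipschitzWith (Real.toNNReal η⁻¹) fun d => max (1 - d / η) 0 := by
    refine LipschitzWith.of_dist_le' fun x y => ?_
    rw [Real.dist_eq, Real.dist_eq]
    calc |max (1 - x / η) 0 - max (1 - y / η) 0| ≤ |(1 - x / η) - (1 - y / η)| :=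
          abs_max_sub_max_le_abs _ _ _
      _ = η⁻¹ * |x - y| := by
          rw [show (1 - x / η) - (1 - y / η) = η⁻¹ * (y - x) by ring, abs_mul,
            abs_of_pos (inv_pos.2 hη), abs_sub_comm]
  exact hlog.sub ((lipschitzWith_smul (log η)).comp htent)

lemma abs_truncLog_le (hη : 0 < η) (hηR : η ≤ R) (hd : 0 ≤ d) :
    |truncLog η R d| ≤ |log R| + 2 * |log η| := by
  have hlog : |log (max (min d R) η)| ≤ |log R| + |log η| := by
    have := abs_le_max_abs_abs (log_le_log hη (le_max_right (min d R) η))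
      (log_le_log (hη.trans_le (le_max_right _ _)) (max_le (min_le_right d R) hηR))
    exact this.trans (max_le_add_of_nonneg (abs_nonneg _) (abs_nonneg _)) |>.trans_eq (add_comm _ _)
  have htent : |log η * max (1 - d / η) 0| ≤ |log η| := by
    rw [abs_mul]
    refine mul_le_of_le_one_right (abs_nonneg _) ?_
    rw [abs_of_nonneg (le_max_right _ _)]
    exact max_le (sub_le_self _ (div_nonneg hd hη.le)) zero_le_one
  calc |truncLog η R d| ≤ |log (max (min d R) η)| + |log η * max (1 - d / η) 0| := abs_sub _ _
    _ ≤ |log R| + 2 * |log η| := by linarith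

lemma log_le_truncLog (hη₀ : 0 ≤ η) (hη₁ : η ≤ 1) (hd : 0 ≤ d) (hdR : d ≤ R) :
    log d ≤ truncLog η R d := by
  rcases hd.eq_or_lt with rfl | hd
  · simp [truncLog, min_eq_left hdR, max_eq_right hη₀]
  · have htent : 0 ≤ -log η * max (1 - d / η) 0 :=
      mul_nonneg (neg_nonneg.2 (log_nonpos hη₀ hη₁)) (le_max_right _ _)
    calc log d ≤ log (max (min d R) η) := by
          rw [min_eq_left hdR]; exact log_le_log hd (le_max_left _ _)
      _ ≤ truncLog η R d := by rw [truncLog]; linarith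

lemma truncLog_eq_log (hη : 0 < η) (hηd : η ≤ d) (hdR : d ≤ R) : truncLog η R d = log d := by
  have htent : max (1 - d / η) 0 = 0 :=
    max_eq_right (sub_nonpos.2 ((one_le_div hη).2 hηd))
  rw [truncLog, htent, min_eq_left hdR, max_eq_left hηd, mul_zero, sub_zero]

end truncLog

theorem log_potential_uniformly_continuous_general
    (β γ : ℝ) (hβ : β = 1 ∨ β = 2)
    (a b T : ℝ) (ha : β * (Real.sqrt γ + 1) ^ 2 < a) (hbT : b ≤ T) :
    ∀ δ : ℝ, 0 < δ → ∃ ε : ℝ, 0 < ε ∧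
      ∀ z ∈ Set.Icc a b, ∀ μ : Measure ℝ, IsProbabilityMeasure μ →
        μ (Set.Icc (0 : ℝ) T)ᶜ = 0 →
        Integrable (fun y => Real.log |z - y|) μ →
        (∀ (h : ℝ → ℝ) (c : ℝ) (K : NNReal), (∀ y, |h y| ≤ c) → LipschitzWith K h →
          c + (K : ℝ) ≤ 1 → |∫ y, h y ∂μ - ∫ y, h y ∂(mpLaw β γ)| ≤ ε) →
        ∫ y, Real.log |z - y| ∂μ ≤ (∫ t, Real.log (z - t) ∂(mpLaw β γ)) + δ := by
  intro δ hδ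
  have hβ0 : 0 ≤ β := by rcases hβ with rfl | rfl <;> norm_num
  have hs_lo : 0 ≤ β * (√γ - 1) ^ 2 := mul_nonneg hβ0 (sq_nonneg _)
  have hs_hi : 0 ≤ β * (√γ + 1) ^ 2 := mul_nonneg hβ0 (sq_nonneg _)
  set η := min (a - β * (√γ + 1) ^ 2) 1
  have hη : 0 < η := lt_min (sub_pos.2 ha) one_pos
  set M := |log T| + 2 * |log η|
  set K := Real.toNNReal η⁻¹ + ‖log η‖₊ * Real.toNNReal η⁻¹
  have hMK : 0 < M + K := by positivity
  refine ⟨δ / (M + K), div_pos hδ hMK, fun z hz μ _ hμ hint hBL => ?_⟩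
  have hηz : η ≤ z - β * (√γ + 1) ^ 2 := (min_le_left _ _).trans (by linarith [hz.1])
  have hηT : η ≤ T := by linarith [hz.2]
  set G := fun y => truncLog η T (dist y z)
  have hG_lip : LipschitzWith K G := by
    have h := (lipschitzWith_truncLog (R := T) hη).comp (LipschitzWith.dist_left z)
    rwa [mul_one] at h
  have hG_bd : ∀ y, |G y| ≤ M := fun y => abs_truncLog_le hη hηT dist_nonneg
  have hμG : ∀ᵐ y ∂μ, log |z - y| ≤ G y := by
    filter_upwards [mem_ae_iff.2 hμ] with y hy
    rw [abs_sub_comm, ← Real.dist_eq]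
    exact log_le_truncLog hη.le (min_le_right _ _) dist_nonneg
      (abs_sub_le_iff.2 ⟨by linarith [hy.2, hz.1], by linarith [hy.1, hz.2]⟩)
  have hσG : ∀ᵐ y ∂mpLaw β γ, G y = log (z - y) := by
    filter_upwards [mpLaw_ae_mem β γ] with y hy
    show truncLog η T (dist y z) = _
    rw [dist_comm, Real.dist_eq, abs_of_pos (by linarith [hy.2])]
    exact truncLog_eq_log hη (by linarith [hy.2]) (by linarith [hy.1, hz.2])
  have hmajorant := integral_le_add_of_boundedLipschitz_majorant hBL hG_bd hG_lip hMK hint hμG hσG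
  rwa [mul_div_cancel₀ _ hMK.ne'] at hmajorant

/-- **Uniform continuity of the log-potential in the bounded-Lipschitz metric**
(claim (23), "High_tower", in the proof of Theorem 1). For `s^* < a ≤ b ≤ T` and
every `δ > 0` there is `ε > 0` such that for all `z ∈ [a,b]` and every Borel
probability measure `μ` supported in `[0,T]`, with `y ↦ ln|z−y|` `μ`-integrable
and with bounded-Lipschitz distance at most `ε` from `σ_{β,γ}`, one has
`∫ ln|z−y| dμ ≤ ∫ ln(z−t) dσ_{β,γ} + δ`. -/
theorem log_potential_uniformly_continuous
    (β γ : ℝ) (hβ : β = 1 ∨ β = 2) (hγ : γ ∈ Set.Ioc (0 : ℝ) 1)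
    (a b T : ℝ) (ha : β * (Real.sqrt γ + 1) ^ 2 < a) (hab : a ≤ b) (hbT : b ≤ T) :
    ∀ δ : ℝ, 0 < δ → ∃ ε : ℝ, 0 < ε ∧
      ∀ z ∈ Set.Icc a b, ∀ μ : Measure ℝ, IsProbabilityMeasure μ →
        μ (Set.Icc (0 : ℝ) T)ᶜ = 0 →
        Integrable (fun y => Real.log |z - y|) μ →
        (∀ (h : ℝ → ℝ) (c : ℝ) (K : NNReal), (∀ y, |h y| ≤ c) → LipschitzWith K h →
          c + (K : ℝ) ≤ 1 → |∫ y, h y ∂μ - ∫ y, h y ∂(mpLaw β γ)| ≤ ε) →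
        ∫ y, Real.log |z - y| ∂μ ≤ (∫ t, Real.log (z - t) ∂(mpLaw β γ)) + δ :=
  log_potential_uniformly_continuous_general β γ hβ a b T ha hbT
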